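/- Let A be a real m × n matrix, b ∈ ℝᵐ, λ > 0, a > 0, and 0 < μ < 1/‖A‖₂². Define C₁(x) = ‖Ax − b‖₂² + λ P_a(x), C₂(x, z) = μ(C₁(x) − ‖Ax − Az‖₂²) + ‖x − z‖₂², and let (x^k) be a sequence of nonnegative vectors such that for each k, x^{k+1} is a global minimizer of C₂(·, x^k) over {x ∈ ℝⁿ : x ≥ 0}. Then the series Σ_{k=1}^∞ ‖x^{k+1} − x^k‖₂² converges; in particular ‖x^{k+1} − x^k‖₂ → 0 as k → ∞, i.e., the sequence (x^k) is asymptotically regular. -/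

import Mathlib

open Matrix Filter Topology

noncomputable def rho (a t : ℝ) : ℝ := a * |t| / (a * |t| + 1)

noncomputable def Pa {n : ℕ} (a : ℝ) (x : Fin n → ℝ) : ℝ := ∑ i, rho a (x i)

open scoped Classical in
noncomputable def l0 {n : ℕ} (x : Fin n → ℝ) : ℕ :=
  (Finset.univ.filter fun i => x i ≠ 0).card

def SOL {m n : ℕ} (A : Matrix (Fin m) (Fin n) ℝ) (b : Fin m → ℝ) : Set (Fin n → ℝ) :=
  {x | A.mulVec x = b ∧ 0 ≤ x}

noncomputable def sqN {n : ℕ} (v : Fin n → ℝ) : ℝ := ∑ i, (v i) ^ 2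

def projPos {n : ℕ} (v : Fin n → ℝ) : Fin n → ℝ := fun i => max 0 (v i)

noncomputable def C1 {m n : ℕ} (A : Matrix (Fin m) (Fin n) ℝ) (b : Fin m → ℝ)
    (lam a : ℝ) (x : Fin n → ℝ) : ℝ :=
  sqN (A.mulVec x - b) + lam * Pa a x

noncomputable def C2 {m n : ℕ} (A : Matrix (Fin m) (Fin n) ℝ) (b : Fin m → ℝ)
    (lam a mu : ℝ) (x z : Fin n → ℝ) : ℝ :=
  mu * (C1 A b lam a x - sqN (A.mulVec x - A.mulVec z)) + sqN (x - z)

noncomputable def Bmu {m n : ℕ} (A : Matrix (Fin m) (Fin n) ℝ) (b : Fin m → ℝ)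
    (mu : ℝ) (z : Fin n → ℝ) : Fin n → ℝ :=
  z + mu • (Aᵀ.mulVec (b - A.mulVec z))

/-! Comparing the surrogate `C2 · xᵏ` at its minimiser `xᵏ⁺¹` with its value at `xᵏ`, where it
equals `μ C1(xᵏ)`, and using `‖A v‖² ≤ ‖A‖² ‖v‖²` gives the sufficient decrease
`μ C1(xᵏ⁺¹) + (1 - μ‖A‖²) ‖xᵏ⁺¹ - xᵏ‖² ≤ μ C1(xᵏ)`. Since `1 - μ‖A‖² > 0` and `C1 ≥ 0`, the
squared steps telescope to a bounded series. -/

lemma sqN_nonneg {n : ℕ} (v : Fin n → ℝ) : 0 ≤ sqN v :=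
  Finset.sum_nonneg fun _ _ => sq_nonneg _

lemma sqN_eq_norm_toLp_sq {n : ℕ} (v : Fin n → ℝ) : sqN v = ‖WithLp.toLp 2 v‖ ^ 2 := by
  simp [EuclideanSpace.norm_sq_eq, sqN]

lemma rho_nonneg {a : ℝ} (ha : 0 ≤ a) (t : ℝ) : 0 ≤ rho a t := by
  unfold rho
  positivity

lemma C1_nonneg {m n : ℕ} (A : Matrix (Fin m) (Fin n) ℝ) (b : Fin m → ℝ) {lam a : ℝ}
    (hl : 0 ≤ lam) (ha : 0 ≤ a) (x : Fin n → ℝ) : 0 ≤ C1 A b lam a x :=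
  add_nonneg (sqN_nonneg _) (mul_nonneg hl (Finset.sum_nonneg fun _ _ => rho_nonneg ha _))

lemma C2_self {m n : ℕ} (A : Matrix (Fin m) (Fin n) ℝ) (b : Fin m → ℝ) (lam a mu : ℝ)
    (z : Fin n → ℝ) : C2 A b lam a mu z z = mu * C1 A b lam a z := by
  simp [C2, sqN]

section L2OperatorNorm

open scoped Matrix.Norms.L2Operator

lemma sqN_mulVec_le {m n : ℕ} (A : Matrix (Fin m) (Fin n) ℝ) (v : Fin n → ℝ) :
    sqN (A *ᵥ v) ≤ ‖A‖ ^ 2 * sqN v := by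
  rw [sqN_eq_norm_toLp_sq, sqN_eq_norm_toLp_sq, ← mul_pow]
  exact pow_le_pow_left₀ (norm_nonneg _) (Matrix.l2_opNorm_mulVec A (WithLp.toLp 2 v)) 2

lemma one_sub_mul_norm_sq_pos {m n : ℕ} {A : Matrix (Fin m) (Fin n) ℝ} {mu : ℝ}
    (hmu : mu < 1 / ‖A‖ ^ 2) : 0 < 1 - mu * ‖A‖ ^ 2 := by
  rcases (sq_nonneg ‖A‖).eq_or_lt with h | h
  · simp [← h]
  · linarith [(lt_div_iff₀ h).mp hmu]

lemma C1_add_le_C2 {m n : ℕ} (A : Matrix (Fin m) (Fin n) ℝ) (b : Fin m → ℝ) (lam a : ℝ)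
    {mu : ℝ} (hmu : 0 ≤ mu) (x z : Fin n → ℝ) :
    mu * C1 A b lam a x + (1 - mu * ‖A‖ ^ 2) * sqN (x - z) ≤ C2 A b lam a mu x z := by
  have hA : sqN (A *ᵥ x - A *ᵥ z) ≤ ‖A‖ ^ 2 * sqN (x - z) := by
    rw [← Matrix.mulVec_sub]
    exact sqN_mulVec_le A (x - z)
  unfold C2
  nlinarith [mul_le_mul_of_nonneg_left hA hmu]

end L2OperatorNorm

lemma summable_of_sufficient_decrease {f d : ℕ → ℝ} {c : ℝ} (hc : 0 < c)
    (hf : ∀ k, 0 ≤ f k) (hd : ∀ k, 0 ≤ d k) (hdec : ∀ k, f (k + 1) + c * d k ≤ f k) :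
    Summable d := by
  refine summable_of_sum_range_le hd (c := f 0 / c) fun N => ?_
  have htel : c * ∑ k ∈ Finset.range N, d k ≤ f 0 - f N := by
    induction N with
    | zero => simp
    | succ N ih =>
      rw [Finset.sum_range_succ, mul_add]
      linarith [hdec N]
  rw [le_div_iff₀ hc, mul_comm]
  linarith [hf N]

open scoped Matrix.Norms.L2Operator in
theorem stmt18 {m n : ℕ} (A : Matrix (Fin m) (Fin n) ℝ) (b : Fin m → ℝ)
    (lam a mu : ℝ) (hl : 0 < lam) (ha : 0 < a)
    (hmu : 0 < mu) (hmu2 : mu < 1 / ‖A‖ ^ 2)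
    (xseq : ℕ → (Fin n → ℝ)) (hpos : ∀ k, 0 ≤ xseq k)
    (hstep : ∀ k, ∀ y : Fin n → ℝ, 0 ≤ y →
      C2 A b lam a mu (xseq (k + 1)) (xseq k) ≤ C2 A b lam a mu y (xseq k)) :
    Summable (fun k : ℕ => sqN (xseq (k + 1) - xseq k)) ∧
    Filter.Tendsto (fun k : ℕ => Real.sqrt (sqN (xseq (k + 1) - xseq k)))
      Filter.atTop (nhds 0) := by
  have hdec : ∀ k, mu * C1 A b lam a (xseq (k + 1))
      + (1 - mu * ‖A‖ ^ 2) * sqN (xseq (k + 1) - xseq k) ≤ mu * C1 A b lam a (xseq k) :=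
    fun k => calc
      _ ≤ C2 A b lam a mu (xseq (k + 1)) (xseq k) := C1_add_le_C2 A b lam a hmu.le _ _
      _ ≤ C2 A b lam a mu (xseq k) (xseq k) := hstep k _ (hpos k)
      _ = mu * C1 A b lam a (xseq k) := C2_self A b lam a mu _
  have hsum : Summable fun k => sqN (xseq (k + 1) - xseq k) :=
    summable_of_sufficient_decrease (one_sub_mul_norm_sq_pos hmu2)
      (fun k => mul_nonneg hmu.le (C1_nonneg A b hl.le ha.le _)) (fun k => sqN_nonneg _) hdec
  refine ⟨hsum, ?_⟩
  simpa using hsum.tendsto_atTop_zero.sqrt
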